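/- Fix k ≥ 1, σ > 0, and the GvM_k spectral density f_σ(θ) = σ² · exp{ Σ_{j=1}^k κ_j cos(j(θ - μ_j)) } / (2π G₀), where G₀ normalizes the density to a probability density. Then among all spectral densities g_σ with total mass σ² satisfying ∫_{-π}^{π} e^{irθ} g_σ(θ) dθ = ∫_{-π}^{π} e^{irθ} f_σ(θ) dθ for r = 1,...,k, the density f_σ maximizes the spectral entropy S(g_σ) = -∫_{-π}^{π} log( g_σ(θ)/(σ²/(2π)) ) g_σ(θ) dθ, and the maximizer is unique up to almost-everywhere equality. -/

import Mathlib

/-!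
With `klFun x = x log x + 1 - x`, which is nonnegative on `[0, ∞)` and vanishes only at `1`, the
integrand `f · klFun (g / f) = g log (g / f) - g + f` is nonnegative and vanishes exactly where
`g = f`. For the GvM density, `log (f / c)` is the trigonometric polynomial
`∑ κ_j cos (j (θ - μ_j))` plus a constant; each `cos (j (θ - μ_j))` is the real part of a rotated
`e^{ijθ}`, so the constraints and the mass condition give `∫ log (f / c) g = ∫ log (f / c) f`,
and the integral of `f · klFun (g / f)` is exactly `S(f) - S(g)`.
-/

open MeasureTheory Real Set InformationTheory

lemma mul_klFun_div_eq {a b c : ℝ} (ha : 0 ≤ a) (hb : 0 < b) (hc : c ≠ 0) :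
    b * klFun (a / b) = log (a / c) * a - log (b / c) * a - a + b := by
  rcases ha.eq_or_lt with rfl | ha
  · simp [klFun_zero]
  · rw [klFun_apply, log_div ha.ne' hc, log_div hb.ne' hc, log_div ha.ne' hb.ne']
    field_simp
    ring

lemma mul_klFun_div_nonneg {a b : ℝ} (ha : 0 ≤ a) (hb : 0 < b) : 0 ≤ b * klFun (a / b) :=
  mul_nonneg hb.le (klFun_nonneg (div_nonneg ha hb.le))

section Gibbs

variable {α : Type*} [MeasurableSpace α] {μ : Measure α}

lemma integral_mul_klFun_div_eq_zero_iff {f g : α → ℝ} (hf : ∀ x, 0 < f x) (hg : ∀ x, 0 ≤ g x)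
    (hi : Integrable (fun x => f x * klFun (g x / f x)) μ) :
    ∫ x, f x * klFun (g x / f x) ∂μ = 0 ↔ g =ᵐ[μ] f := by
  rw [integral_eq_zero_iff_of_nonneg (fun x => mul_klFun_div_nonneg (hg x) (hf x)) hi]
  refine Filter.eventually_congr (ae_of_all _ fun x => ?_)
  rw [Pi.zero_apply, mul_eq_zero, klFun_eq_zero_iff (div_nonneg (hg x) (hf x).le),
    div_eq_one_iff_eq (hf x).ne']
  simp [(hf x).ne']

theorem gibbs_entropy_le_and_eq_iff {f g φ : α → ℝ} {A c : ℝ} (hA : 0 < A) (hc : c ≠ 0)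
    (hf : ∀ x, f x = A * exp (φ x)) (hg : ∀ x, 0 ≤ g x)
    (hfi : Integrable f μ) (hgi : Integrable g μ) (hmass : ∫ x, g x ∂μ = ∫ x, f x ∂μ)
    (hφf : Integrable (fun x => φ x * f x) μ) (hφg : Integrable (fun x => φ x * g x) μ)
    (hmom : ∫ x, φ x * g x ∂μ = ∫ x, φ x * f x ∂μ)
    (hgent : Integrable (fun x => log (g x / c) * g x) μ) :
    (-∫ x, log (g x / c) * g x ∂μ) ≤ (-∫ x, log (f x / c) * f x ∂μ) ∧
      ((-∫ x, log (g x / c) * g x ∂μ) = (-∫ x, log (f x / c) * f x ∂μ) ↔ g =ᵐ[μ] f) := by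
  have hf_pos : ∀ x, 0 < f x := fun x => by rw [hf]; positivity
  have hlogf : ∀ x, log (f x / c) = φ x + log (A / c) := fun x => by
    rw [hf, mul_div_right_comm, log_mul (div_ne_zero hA.ne' hc) (exp_pos _).ne', log_exp, add_comm]
  have hΦ : (fun x => f x * klFun (g x / f x)) = fun x =>
      log (g x / c) * g x - (φ x * g x + log (A / c) * g x) - g x + f x := by
    ext x
    rw [mul_klFun_div_eq (hg x) (hf_pos x) hc, hlogf]
    ring
  have hlin : Integrable (fun x => φ x * g x + log (A / c) * g x) μ := hφg.add (hgi.const_mul _)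
  have hsub : Integrable (fun x => log (g x / c) * g x - (φ x * g x + log (A / c) * g x)) μ :=
    hgent.sub hlin
  have hsub' : Integrable
      (fun x => log (g x / c) * g x - (φ x * g x + log (A / c) * g x) - g x) μ := hsub.sub hgi
  have hΦi : Integrable (fun x => f x * klFun (g x / f x)) μ := hΦ ▸ hsub'.add hfi
  have hΦint : ∫ x, f x * klFun (g x / f x) ∂μ =
      ∫ x, log (g x / c) * g x ∂μ - ∫ x, log (f x / c) * f x ∂μ := by
    simp_rw [hΦ, hlogf, add_mul]
    rw [integral_add hsub' hfi, integral_sub hsub hgi, integral_sub hgent hlin,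
      integral_add hφg (hgi.const_mul _), integral_add hφf (hfi.const_mul _), integral_const_mul,
      integral_const_mul, hmass, hmom]
    ring
  have hΦ0 : 0 ≤ ∫ x, f x * klFun (g x / f x) ∂μ :=
    integral_nonneg fun x => mul_klFun_div_nonneg (hg x) (hf_pos x)
  rw [← integral_mul_klFun_div_eq_zero_iff hf_pos hg hΦi, hΦint]
  constructor
  · linarith
  · constructor <;> intro h <;> linarith

end Gibbs

noncomputable def cosSum (s : Finset ℕ) (κ m : ℕ → ℝ) (θ : ℝ) : ℝ :=
  ∑ j ∈ s, κ j * cos (j * (θ - m j))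

section CosSum

variable (s : Finset ℕ) (κ m : ℕ → ℝ)

@[fun_prop]
lemma continuous_cosSum : Continuous (cosSum s κ m) :=
  continuous_finsetSum _ fun _ _ => by fun_prop

lemma abs_cosSum_le (θ : ℝ) : |cosSum s κ m θ| ≤ ∑ j ∈ s, |κ j| :=
  (Finset.abs_sum_le_sum_abs _ _).trans <| Finset.sum_le_sum fun j _ => by
    rw [abs_mul]
    exact mul_le_of_le_one_right (abs_nonneg _) (abs_cos_le_one _)

variable {s κ m} {μ : Measure ℝ} {u v : ℝ → ℝ}

lemma MeasureTheory.Integrable.cosSum_mul (hu : Integrable u μ) :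
    Integrable (fun θ => cosSum s κ m θ * u θ) μ :=
  hu.bdd_mul (continuous_cosSum s κ m).aestronglyMeasurable
    (ae_of_all _ fun θ => (Real.norm_eq_abs _).trans_le (abs_cosSum_le s κ m θ))

lemma integral_cos_mul_eq_re (hu : Integrable u μ) (r a : ℝ) :
    ∫ θ, cos (r * (θ - a)) * u θ ∂μ =
      (Complex.exp (-(Complex.I * r * a)) *
        ∫ θ, Complex.exp (Complex.I * r * θ) * u θ ∂μ).re := by
  have hi : Integrable (fun θ : ℝ => Complex.exp (Complex.I * r * θ) * u θ) μ :=
    hu.ofReal.bdd_mul (by fun_prop) (ae_of_all _ fun θ => by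
      rw [show Complex.I * r * θ = ((r * θ : ℝ) : ℂ) * Complex.I by push_cast; ring,
        Complex.norm_exp_ofReal_mul_I])
  rw [← integral_const_mul, ← RCLike.re_eq_complex_re, ← integral_re (hi.const_mul _)]
  refine integral_congr_ae (ae_of_all _ fun θ => ?_)
  dsimp only
  rw [← mul_assoc, ← Complex.exp_add,
    show -(Complex.I * r * a) + Complex.I * r * θ = ((r * (θ - a) : ℝ) : ℂ) * Complex.I by
      push_cast; ring]
  simp only [RCLike.re_eq_complex_re, Complex.re_mul_ofReal, Complex.exp_ofReal_mul_I_re]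

lemma integral_cosSum_mul (hu : Integrable u μ) :
    ∫ θ, cosSum s κ m θ * u θ ∂μ = ∑ j ∈ s, κ j * ∫ θ, cos (j * (θ - m j)) * u θ ∂μ := by
  simp only [cosSum, Finset.sum_mul, mul_assoc]
  rw [integral_finsetSum _ fun j _ => (hu.bdd_mul (by fun_prop)
    (ae_of_all _ fun θ => (Real.norm_eq_abs _).trans_le (abs_cos_le_one _))).const_mul _]
  simp only [integral_const_mul]

lemma integral_cosSum_mul_eq (hu : Integrable u μ) (hv : Integrable v μ)
    (h : ∀ r ∈ s, ∫ θ, Complex.exp (Complex.I * r * θ) * u θ ∂μ =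
      ∫ θ, Complex.exp (Complex.I * r * θ) * v θ ∂μ) :
    ∫ θ, cosSum s κ m θ * u θ ∂μ = ∫ θ, cosSum s κ m θ * v θ ∂μ := by
  rw [integral_cosSum_mul hu, integral_cosSum_mul hv]
  refine Finset.sum_congr rfl fun j hj => ?_
  simp only [integral_cos_mul_eq_re hu, integral_cos_mul_eq_re hv, Complex.ofReal_natCast, h j hj]

end CosSum

theorem gvm_max_spectral_entropy_general (k : ℕ) (σ : ℝ) (hσ : 0 < σ)
    (μpar κ : ℕ → ℝ)
    (G₀ : ℝ)
    (hG₀ : G₀ = (2 * π)⁻¹ * ∫ θ in Ioc (-π) π,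
      Real.exp (∑ j ∈ Finset.Icc 1 k, κ j * Real.cos (j * (θ - μpar j))))
    (f : ℝ → ℝ)
    (hfdef : ∀ θ, f θ =
      σ ^ 2 * Real.exp (∑ j ∈ Finset.Icc 1 k, κ j * Real.cos (j * (θ - μpar j))) /
        (2 * π * G₀))
    (g : ℝ → ℝ) (hg0 : ∀ θ, 0 ≤ g θ)
    (hgmass : ∫ θ in Ioc (-π) π, g θ = σ ^ 2)
    (hconstraints : ∀ r ∈ Finset.Icc 1 k,
      (∫ θ in Ioc (-π) π, Complex.exp (Complex.I * r * θ) * (g θ : ℝ)) =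
        ∫ θ in Ioc (-π) π, Complex.exp (Complex.I * r * θ) * (f θ : ℝ))
    (hIg : IntegrableOn (fun θ => Real.log (g θ / (σ ^ 2 / (2 * π))) * g θ) (Ioc (-π) π)) :
    (-∫ θ in Ioc (-π) π, Real.log (g θ / (σ ^ 2 / (2 * π))) * g θ) ≤
      (-∫ θ in Ioc (-π) π, Real.log (f θ / (σ ^ 2 / (2 * π))) * f θ) ∧
    ((-∫ θ in Ioc (-π) π, Real.log (g θ / (σ ^ 2 / (2 * π))) * g θ) =
        (-∫ θ in Ioc (-π) π, Real.log (f θ / (σ ^ 2 / (2 * π))) * f θ) ↔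
      g =ᵐ[volume.restrict (Ioc (-π) π)] f) := by
  set h := cosSum (Finset.Icc 1 k) κ μpar
  replace hG₀ : G₀ = (2 * π)⁻¹ * ∫ θ in Ioc (-π) π, exp (h θ) := hG₀
  have hvol : NeZero (volume (Ioc (-π) π)) := ⟨by simp [pi_pos]⟩
  have hZ : 0 < ∫ θ in Ioc (-π) π, exp (h θ) :=
    integral_exp_pos (continuous_cosSum _ _ _).rexp.integrableOn_Ioc
  have hA : 0 < σ ^ 2 / (2 * π * G₀) := by
    have : 0 < G₀ := hG₀ ▸ mul_pos (by positivity) hZ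
    positivity
  have hf : ∀ θ, f θ = σ ^ 2 / (2 * π * G₀) * exp (h θ) :=
    fun θ => (hfdef θ).trans (mul_div_right_comm _ _ _)
  have hfi : IntegrableOn f (Ioc (-π) π) := by
    rw [funext hf]
    exact (by fun_prop : Continuous _).integrableOn_Ioc
  have hfmass : ∫ θ in Ioc (-π) π, f θ = σ ^ 2 := by
    rw [funext hf, integral_const_mul, hG₀]
    field_simp
  have hgi : IntegrableOn g (Ioc (-π) π) := .of_integral_ne_zero (by rw [hgmass]; positivity)
  exact gibbs_entropy_le_and_eq_iff hA (by positivity) hf hg0 hfi hgi (hgmass.trans hfmass.symm)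
    hfi.cosSum_mul hgi.cosSum_mul (integral_cosSum_mul_eq hgi hfi hconstraints) hIg

/-- The GvM_k spectral density maximizes the spectral Shannon entropy among all
spectral densities of total mass `σ²` satisfying the same first `k` autocovariance
constraints; the maximizer is unique up to a.e. equality. -/
theorem gvm_max_spectral_entropy (k : ℕ) (hk : 1 ≤ k) (σ : ℝ) (hσ : 0 < σ)
    (μpar κ : ℕ → ℝ)
    (hμ : ∀ j ∈ Finset.Icc 1 k, μpar j ∈ Ioc (-(π / j)) (π / j))
    (hκ : ∀ j ∈ Finset.Icc 1 k, 0 ≤ κ j)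
    (G₀ : ℝ)
    (hG₀ : G₀ = (2 * π)⁻¹ * ∫ θ in Ioc (-π) π,
      Real.exp (∑ j ∈ Finset.Icc 1 k, κ j * Real.cos (j * (θ - μpar j))))
    (f : ℝ → ℝ)
    (hfdef : ∀ θ, f θ =
      σ ^ 2 * Real.exp (∑ j ∈ Finset.Icc 1 k, κ j * Real.cos (j * (θ - μpar j))) /
        (2 * π * G₀))
    (g : ℝ → ℝ) (hg : Measurable g) (hg0 : ∀ θ, 0 ≤ g θ)
    (hgmass : ∫ θ in Ioc (-π) π, g θ = σ ^ 2)
    (hconstraints : ∀ r ∈ Finset.Icc 1 k,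
      (∫ θ in Ioc (-π) π, Complex.exp (Complex.I * r * θ) * (g θ : ℝ)) =
        ∫ θ in Ioc (-π) π, Complex.exp (Complex.I * r * θ) * (f θ : ℝ))
    (hIg : IntegrableOn (fun θ => Real.log (g θ / (σ ^ 2 / (2 * π))) * g θ) (Ioc (-π) π)) :
    (-∫ θ in Ioc (-π) π, Real.log (g θ / (σ ^ 2 / (2 * π))) * g θ) ≤
      (-∫ θ in Ioc (-π) π, Real.log (f θ / (σ ^ 2 / (2 * π))) * f θ) ∧
    ((-∫ θ in Ioc (-π) π, Real.log (g θ / (σ ^ 2 / (2 * π))) * g θ) =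
        (-∫ θ in Ioc (-π) π, Real.log (f θ / (σ ^ 2 / (2 * π))) * f θ) ↔
      g =ᵐ[volume.restrict (Ioc (-π) π)] f) :=
  gvm_max_spectral_entropy_general k σ hσ μpar κ G₀ hG₀ f hfdef g hg0 hgmass hconstraints hIg
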